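/- arXiv:1503.04166 — 4 statements merged into one kernel-verified Lean document; each statement's English description precedes it below -/
import Mathlib

section
/- Let (Y, d₁) and (Y, d₂) be two metrics on a set Y such that d₁ ≤ d₁ + d₂ =: d, the space (Y, d) is separable, and for each fixed y' ∈ Y the map y ↦ d(y, y') is measurable with respect to the Borel σ-algebra of d₁. Then the Borel σ-algebra generated by d coincides with the Borel σ-algebra generated by d₁, provided additionally that every d₁-open set is d-open. -/
/-- if `d = d₁ + d₂`, `(Y,d)` is separable, each `y ↦ d(y,y')` is
Borel(`d₁`)-measurable, and every `d₁`-open set is `d`-open, then the Borel σ-algebras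
of `d` and `d₁` coincide. -/
theorem stmt_6 {Y : Type*} (m₁ m : MetricSpace Y) (d₂ : Y → Y → ℝ)
    (hd : ∀ y y' : Y,
      @dist _ m.toPseudoMetricSpace.toDist y y'
        = @dist _ m₁.toPseudoMetricSpace.toDist y y' + d₂ y y')
    (hsep : @TopologicalSpace.SeparableSpace Y
      m.toPseudoMetricSpace.toUniformSpace.toTopologicalSpace)
    (hmeas : ∀ y' : Y,
      @Measurable Y ℝ (@borel Y m₁.toPseudoMetricSpace.toUniformSpace.toTopologicalSpace) _
        (fun y => @dist _ m.toPseudoMetricSpace.toDist y y'))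
    (hopen : ∀ s : Set Y,
      @IsOpen Y m₁.toPseudoMetricSpace.toUniformSpace.toTopologicalSpace s →
      @IsOpen Y m.toPseudoMetricSpace.toUniformSpace.toTopologicalSpace s) :
    @borel Y m.toPseudoMetricSpace.toUniformSpace.toTopologicalSpace
      = @borel Y m₁.toPseudoMetricSpace.toUniformSpace.toTopologicalSpace := by
  letI := m
  haveI := hsep
  haveI : SecondCountableTopology Y := UniformSpace.secondCountable_of_separable Y
  apply le_antisymm
  · -- borel d ≤ borel d₁
    apply MeasurableSpace.generateFrom_le
    intro U hU
    -- U is d-open; write it as countable union of balls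
    have hball : ∀ x : Y, ∀ r : ℝ,
        @MeasurableSet Y (@borel Y m₁.toPseudoMetricSpace.toUniformSpace.toTopologicalSpace)
          (Metric.ball x r) := by
      intro x r
      have := (hmeas x) measurableSet_Iio (t := Set.Iio r)
      convert this using 1
      rfl
    set S : Set (Set Y) := {s | ∃ x r, s = Metric.ball x r ∧ s ⊆ U} with hS
    have hSopen : ∀ s ∈ S, IsOpen s := by
      rintro s ⟨x, r, rfl, -⟩
      exact Metric.isOpen_ball
    have hSU : ⋃₀ S = U := by
      apply Set.Subset.antisymm
      · exact Set.sUnion_subset fun s hs => hs.choose_spec.choose_spec.2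
      · intro y hy
        obtain ⟨ε, hε, hsub⟩ := Metric.isOpen_iff.1 hU y hy
        exact ⟨Metric.ball y ε, ⟨y, ε, rfl, hsub⟩, Metric.mem_ball_self hε⟩
    obtain ⟨T, hTc, hTS, hTU⟩ := TopologicalSpace.isOpen_sUnion_countable S hSopen
    rw [← hSU, ← hTU]
    apply MeasurableSet.sUnion hTc
    intro t ht
    obtain ⟨x, r, rfl, -⟩ := hTS ht
    exact hball x r
  · apply MeasurableSpace.generateFrom_le
    intro U hU
    exact MeasurableSpace.measurableSet_generateFrom (hopen U hU)
end

section
/- Suppose a sequence of finite measures η_i on ℝᵈ and a finite measure η on ℝᵈ satisfy: (i) for every g ∈ C₀(X̂), ∫ g dγ_i → ∫ g dγ where γ_i, γ are the point configurations on X̂ = (0,∞)×ℝᵈ representing η_i = ∑ s δ_x, η; and (ii) for every k, the truncated masses ∑_{(s,x)∈γ_i, x∈B(k), s∉[q^N,q^{-N}]} s can be made ≤ 2ε uniformly in large i by choosing N large. Then for every f ∈ C₀(ℝᵈ), ∫ f dη_i → ∫ f dη, i.e., η_i → η vaguely. -/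
open MeasureTheory Filter

lemma coord_le_norm' {d : ℕ} (x : EuclideanSpace ℝ (Fin d)) (j : Fin d) :
    |x j| ≤ ‖x‖ := by
  rw [EuclideanSpace.norm_eq]
  have h1 : |x j| = Real.sqrt (‖x j‖ ^ 2) := by
    rw [Real.sqrt_sq (norm_nonneg _), Real.norm_eq_abs]
  rw [h1]
  exact Real.sqrt_le_sqrt
    (Finset.single_le_sum (fun i _ => sq_nonneg ‖x i‖) (Finset.mem_univ j))

lemma box_closed {d : ℕ} (k : ℕ) :
    IsClosed {p : ℝ × EuclideanSpace ℝ (Fin d) | ∀ j, |p.2 j| ≤ (k : ℝ)} := by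
  have : {p : ℝ × EuclideanSpace ℝ (Fin d) | ∀ j, |p.2 j| ≤ (k : ℝ)} =
      ⋂ j, {p : ℝ × EuclideanSpace ℝ (Fin d) | |p.2 j| ≤ (k : ℝ)} := by
    ext p; simp [Set.mem_iInter]
  rw [this]
  refine isClosed_iInter fun j => isClosed_le ?_ continuous_const
  have : Continuous fun p : ℝ × EuclideanSpace ℝ (Fin d) => p.2 j := by
    exact (EuclideanSpace.proj j).continuous.comp continuous_snd
  exact this.abs

lemma integrable_aux {d : ℕ} (μ : Measure (ℝ × EuclideanSpace ℝ (Fin d)))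
    (hpos : μ {p | p.1 ≤ 0} = 0) (k : ℕ)
    (hloc : (∫⁻ p in {p : ℝ × EuclideanSpace ℝ (Fin d) | ∀ j, |p.2 j| ≤ (k : ℝ)},
      ENNReal.ofReal p.1 ∂μ) < ⊤)
    (f : EuclideanSpace ℝ (Fin d) → ℝ) (hf : Continuous f)
    (M : ℝ) (hM : ∀ x, ‖f x‖ ≤ M)
    (hsupp : ∀ x, f x ≠ 0 → ∀ j, |x j| ≤ (k : ℝ)) :
    Integrable (fun p => f p.2 * p.1) μ := by
  have hM0 : 0 ≤ M := le_trans (norm_nonneg (f 0)) (hM 0)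
  have hae : ∀ᵐ p ∂μ, 0 < p.1 := by
    rw [ae_iff]
    simpa [not_lt] using hpos
  refine ⟨((hf.comp continuous_snd).mul continuous_fst).aestronglyMeasurable, ?_⟩
  rw [hasFiniteIntegral_iff_norm]
  have hbd : ∀ᵐ p ∂μ, ENNReal.ofReal ‖f p.2 * p.1‖ ≤
      Set.indicator {p : ℝ × EuclideanSpace ℝ (Fin d) | ∀ j, |p.2 j| ≤ (k : ℝ)}
        (fun p => ENNReal.ofReal M * ENNReal.ofReal p.1) p := by
    filter_upwards [hae] with p hp
    by_cases hx : p ∈ {p : ℝ × EuclideanSpace ℝ (Fin d) | ∀ j, |p.2 j| ≤ (k : ℝ)}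
    · rw [Set.indicator_of_mem hx, ← ENNReal.ofReal_mul hM0]
      apply ENNReal.ofReal_le_ofReal
      rw [norm_mul, Real.norm_eq_abs p.1, abs_of_pos hp]
      exact mul_le_mul_of_nonneg_right (hM _) hp.le
    · rw [Set.indicator_of_notMem hx]
      have : f p.2 = 0 := by
        by_contra h
        exact hx fun j => hsupp _ h j
      simp [this]
  calc (∫⁻ p, ENNReal.ofReal ‖f p.2 * p.1‖ ∂μ)
      ≤ ∫⁻ p, Set.indicator {p : ℝ × EuclideanSpace ℝ (Fin d) | ∀ j, |p.2 j| ≤ (k : ℝ)}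
        (fun p => ENNReal.ofReal M * ENNReal.ofReal p.1) p ∂μ := lintegral_mono_ae hbd
    _ = ∫⁻ p in {p : ℝ × EuclideanSpace ℝ (Fin d) | ∀ j, |p.2 j| ≤ (k : ℝ)},
        ENNReal.ofReal M * ENNReal.ofReal p.1 ∂μ :=
        lintegral_indicator (box_closed k).measurableSet _
    _ = ENNReal.ofReal M * ∫⁻ p in {p : ℝ × EuclideanSpace ℝ (Fin d) | ∀ j, |p.2 j| ≤ (k : ℝ)},
        ENNReal.ofReal p.1 ∂μ :=
        lintegral_const_mul _ (measurable_fst.ennreal_ofReal)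
    _ < ⊤ := ENNReal.mul_lt_top ENNReal.ofReal_lt_top hloc


lemma key_bound {d : ℕ} (μ : Measure (ℝ × EuclideanSpace ℝ (Fin d)))
    (hpos : μ {p | p.1 ≤ 0} = 0) (k : ℕ)
    (f : EuclideanSpace ℝ (Fin d) → ℝ) (hf : Continuous f)
    (M : ℝ) (hM : ∀ x, ‖f x‖ ≤ M)
    (hsupp : ∀ x, f x ≠ 0 → ∀ j, |x j| ≤ (k : ℝ))
    (χ : ℝ → ℝ) (hχc : Continuous χ) (hχ0 : ∀ s, 0 ≤ χ s) (hχ1 : ∀ s, χ s ≤ 1)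
    (b c : ℝ) (hχeq : ∀ s, b ≤ s → s ≤ c → χ s = 1)
    (t : ℝ) (ht : 0 ≤ t)
    (htail : (∫⁻ p in {p : ℝ × EuclideanSpace ℝ (Fin d) |
        (∀ j, |p.2 j| ≤ (k : ℝ)) ∧ (p.1 < b ∨ c < p.1)},
        ENNReal.ofReal p.1 ∂μ) ≤ ENNReal.ofReal t)
    (hInt1 : Integrable (fun p => f p.2 * p.1) μ) :
    ‖(∫ p, f p.2 * p.1 ∂μ) - ∫ p, f p.2 * p.1 * χ p.1 ∂μ‖ ≤ M * t := by
  have hM0 : 0 ≤ M := le_trans (norm_nonneg (f 0)) (hM 0)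
  have hae : ∀ᵐ p ∂μ, 0 < p.1 := by
    rw [ae_iff]; simpa [not_lt] using hpos
  have hInt2 : Integrable (fun p => f p.2 * p.1 * χ p.1) μ := by
    refine hInt1.mono
      (((hf.comp continuous_snd).mul continuous_fst).mul
        (hχc.comp continuous_fst)).aestronglyMeasurable (Eventually.of_forall fun p => ?_)
    rw [norm_mul]
    apply mul_le_of_le_one_right (norm_nonneg _)
    rw [Real.norm_eq_abs, abs_le]
    exact ⟨le_trans (by norm_num) (hχ0 _), hχ1 _⟩
  set S : Set (ℝ × EuclideanSpace ℝ (Fin d)) :=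
    {p | (∀ j, |p.2 j| ≤ (k : ℝ)) ∧ (p.1 < b ∨ c < p.1)} with hS_def
  have hSmeas : MeasurableSet S := by
    have : S = {p : ℝ × EuclideanSpace ℝ (Fin d) | ∀ j, |p.2 j| ≤ (k : ℝ)} ∩
        ({p : ℝ × EuclideanSpace ℝ (Fin d) | p.1 < b} ∪ {p | c < p.1}) := rfl
    rw [this]
    have h1 : IsClosed {p : ℝ × EuclideanSpace ℝ (Fin d) | ∀ j, |p.2 j| ≤ (k : ℝ)} := by
      have : {p : ℝ × EuclideanSpace ℝ (Fin d) | ∀ j, |p.2 j| ≤ (k : ℝ)} =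
          ⋂ j, {p : ℝ × EuclideanSpace ℝ (Fin d) | |p.2 j| ≤ (k : ℝ)} := by
        ext p; simp [Set.mem_iInter]
      rw [this]
      exact isClosed_iInter fun j => isClosed_le
        (((EuclideanSpace.proj j).continuous.comp continuous_snd).abs) continuous_const
    exact h1.measurableSet.inter
      (((isOpen_lt continuous_fst continuous_const).union
        (isOpen_lt continuous_const continuous_fst)).measurableSet)
  rw [← integral_sub hInt1 hInt2]
  refine le_trans (norm_integral_le_lintegral_norm _) ?_
  have hbd : ∀ᵐ p ∂μ, ENNReal.ofReal ‖f p.2 * p.1 - f p.2 * p.1 * χ p.1‖ ≤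
      S.indicator (fun p => ENNReal.ofReal M * ENNReal.ofReal p.1) p := by
    filter_upwards [hae] with p hp
    by_cases hpS : p ∈ S
    · rw [Set.indicator_of_mem hpS, ← ENNReal.ofReal_mul hM0]
      apply ENNReal.ofReal_le_ofReal
      have heq : f p.2 * p.1 - f p.2 * p.1 * χ p.1 = f p.2 * p.1 * (1 - χ p.1) := by ring
      rw [heq, norm_mul, norm_mul, Real.norm_eq_abs p.1, abs_of_pos hp]
      have h1 : ‖1 - χ p.1‖ ≤ 1 := by
        rw [Real.norm_eq_abs, abs_le]
        constructor <;> nlinarith [hχ0 p.1, hχ1 p.1]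
      calc ‖f p.2‖ * p.1 * ‖1 - χ p.1‖ ≤ M * p.1 * 1 := by
            apply mul_le_mul (mul_le_mul_of_nonneg_right (hM _) hp.le) h1 (norm_nonneg _)
            positivity
        _ = M * p.1 := by ring
    · rw [Set.indicator_of_notMem hpS]
      have h0 : f p.2 * p.1 - f p.2 * p.1 * χ p.1 = 0 := by
        by_cases hx : ∀ j, |p.2 j| ≤ (k : ℝ)
        · have hbc : ¬(p.1 < b ∨ c < p.1) := fun h => hpS ⟨hx, h⟩
          push_neg at hbc
          rw [hχeq p.1 hbc.1 hbc.2]; ring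
        · have : f p.2 = 0 := by
            by_contra h
            exact hx fun j => hsupp _ h j
          simp [this]
      simp [h0]
  have hlin : (∫⁻ p, ENNReal.ofReal ‖f p.2 * p.1 - f p.2 * p.1 * χ p.1‖ ∂μ)
      ≤ ENNReal.ofReal (M * t) := by
    calc (∫⁻ p, ENNReal.ofReal ‖f p.2 * p.1 - f p.2 * p.1 * χ p.1‖ ∂μ)
        ≤ ∫⁻ p, S.indicator (fun p => ENNReal.ofReal M * ENNReal.ofReal p.1) p ∂μ :=
          lintegral_mono_ae hbd
      _ = ∫⁻ p in S, ENNReal.ofReal M * ENNReal.ofReal p.1 ∂μ :=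
          lintegral_indicator hSmeas _
      _ = ENNReal.ofReal M * ∫⁻ p in S, ENNReal.ofReal p.1 ∂μ :=
          lintegral_const_mul _ (measurable_fst.ennreal_ofReal)
      _ ≤ ENNReal.ofReal M * ENNReal.ofReal t := mul_le_mul_right htail _
      _ = ENNReal.ofReal (M * t) := (ENNReal.ofReal_mul hM0).symm
  calc (∫⁻ p, ENNReal.ofReal ‖f p.2 * p.1 - f p.2 * p.1 * χ p.1‖ ∂μ).toReal
      ≤ (ENNReal.ofReal (M * t)).toReal :=
        ENNReal.toReal_mono ENNReal.ofReal_ne_top hlin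
    _ = M * t := ENNReal.toReal_ofReal (mul_nonneg hM0 ht)




/-- continuity of the map `R(γ) = ∑_{(s,x)∈γ} s δ_x` into the vague topology.
If point configurations `γ_i → γ` on `X̂ = (0,∞)×ℝᵈ` in the sense that (i) `∫g dγ_i → ∫g dγ`
for all `g ∈ C₀(X̂)` and (ii) the truncated masses over `B(k) × ((0,q^N)∪(q^{−N},∞))`
are uniformly small for large `N`, then `∫ f dη_i → ∫ f dη` for every `f ∈ C₀(ℝᵈ)`,
where `dη_i(x) = s dγ_i(s,x)`. -/
theorem stmt_13 (d : ℕ) (q : ℝ) (hq : q ∈ Set.Ioo (0 : ℝ) 1)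
    (γi : ℕ → Measure (ℝ × EuclideanSpace ℝ (Fin d)))
    (γ : Measure (ℝ × EuclideanSpace ℝ (Fin d)))
    -- configurations live on (0,∞) × ℝᵈ
    (hγpos : γ {p | p.1 ≤ 0} = 0) (hγipos : ∀ i, γi i {p | p.1 ≤ 0} = 0)
    -- locally finite total mass
    (hγloc : ∀ k : ℕ,
      (∫⁻ p in {p : ℝ × EuclideanSpace ℝ (Fin d) | ∀ j, |p.2 j| ≤ (k : ℝ)},
        ENNReal.ofReal p.1 ∂γ) < ⊤)
    (hγiloc : ∀ i k : ℕ,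
      (∫⁻ p in {p : ℝ × EuclideanSpace ℝ (Fin d) | ∀ j, |p.2 j| ≤ (k : ℝ)},
        ENNReal.ofReal p.1 ∂(γi i)) < ⊤)
    -- (i) vague convergence of the configurations on X̂
    (hvague : ∀ g : ℝ × EuclideanSpace ℝ (Fin d) → ℝ,
      Continuous g → HasCompactSupport g → tsupport g ⊆ {p | 0 < p.1} →
      Tendsto (fun i => ∫ p, g p ∂(γi i)) atTop (nhds (∫ p, g p ∂γ)))
    -- (ii) uniform smallness of the truncated masses
    (htrunc : ∀ ε : ℝ, 0 < ε → ∀ k : ℕ, ∃ N : ℕ,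
      (∫⁻ p in {p : ℝ × EuclideanSpace ℝ (Fin d) |
          (∀ j, |p.2 j| ≤ (k : ℝ)) ∧ (p.1 < q ^ (N : ℤ) ∨ q ^ (-(N : ℤ)) < p.1)},
        ENNReal.ofReal p.1 ∂γ) ≤ ENNReal.ofReal ε ∧
      ∃ I : ℕ, ∀ i ≥ I,
        (∫⁻ p in {p : ℝ × EuclideanSpace ℝ (Fin d) |
            (∀ j, |p.2 j| ≤ (k : ℝ)) ∧ (p.1 < q ^ (N : ℤ) ∨ q ^ (-(N : ℤ)) < p.1)},
          ENNReal.ofReal p.1 ∂(γi i)) ≤ ENNReal.ofReal (2 * ε)) :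
    ∀ f : EuclideanSpace ℝ (Fin d) → ℝ, Continuous f → HasCompactSupport f →
      Tendsto (fun i => ∫ p, f p.2 * p.1 ∂(γi i)) atTop
        (nhds (∫ p, f p.2 * p.1 ∂γ)) := by
  intro f hf hfc
  rw [Set.mem_Ioo] at hq
  obtain ⟨hq0, hq1⟩ := hq
  obtain ⟨C, hC⟩ := hfc.exists_bound_of_continuous hf
  set M : ℝ := C + 1 with hM_def
  have hM : ∀ x, ‖f x‖ ≤ M := fun x => le_trans (hC x) (by simp [hM_def])
  have hM1 : 1 ≤ M := by
    have : 0 ≤ C := le_trans (norm_nonneg (f 0)) (hC 0)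
    simp [hM_def]; linarith
  have hM0 : 0 < M := lt_of_lt_of_le one_pos hM1
  obtain ⟨r, hr⟩ := hfc.isBounded.subset_closedBall 0
  set k : ℕ := ⌈r⌉₊ with hk_def
  have hsupp : ∀ x, f x ≠ 0 → ∀ j, |x j| ≤ (k : ℝ) := by
    intro x hx j
    have hxk : ‖x‖ ≤ (k : ℝ) := by
      have : x ∈ Metric.closedBall 0 r := hr (subset_closure (Set.mem_setOf.mpr hx))
      rw [Metric.mem_closedBall, dist_zero_right] at this
      exact le_trans this (Nat.le_ceil r)
    exact le_trans (coord_le_norm' x j) hxk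
  rw [Metric.tendsto_atTop]
  intro ε hε
  set ε' : ℝ := ε / (8 * M) with hε'_def
  have hε' : 0 < ε' := by positivity
  obtain ⟨N, hγtail, I₀, hitail⟩ := htrunc ε' hε' k
  -- the cutoff
  set a : ℝ := q ^ ((N : ℤ) + 1) with ha_def
  set b : ℝ := q ^ (N : ℤ) with hb_def
  set c : ℝ := q ^ (-(N : ℤ)) with hc_def
  set e : ℝ := q ^ (-(N : ℤ) - 1) with he_def
  have ha : 0 < a := zpow_pos hq0 _
  have hab : a < b := zpow_lt_zpow_right_of_lt_one₀ hq0 hq1 (lt_add_one _)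
  have hbc : b ≤ c := zpow_le_zpow_right_of_le_one₀ hq0 hq1.le (by omega)
  have hce : c < e := zpow_lt_zpow_right_of_lt_one₀ hq0 hq1 (by omega)
  have hba : 0 < b - a := sub_pos.mpr hab
  have hec : 0 < e - c := sub_pos.mpr hce
  set χ : ℝ → ℝ :=
    fun s => max 0 (min 1 (min ((s - a) / (b - a)) ((e - s) / (e - c)))) with hχ_def
  have hχ0 : ∀ s, 0 ≤ χ s := fun s => le_max_left _ _
  have hχ1 : ∀ s, χ s ≤ 1 := fun s => max_le zero_le_one (min_le_left _ _)
  have hχeq : ∀ s, b ≤ s → s ≤ c → χ s = 1 := by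
    intro s hbs hsc
    have h1 : (1 : ℝ) ≤ (s - a) / (b - a) := (one_le_div hba).mpr (by linarith)
    have h2 : (1 : ℝ) ≤ (e - s) / (e - c) := (one_le_div hec).mpr (by linarith)
    rw [hχ_def]
    simp only [min_eq_left (le_min h1 h2), max_eq_right zero_le_one]
  have hχsupp : ∀ s, χ s ≠ 0 → a < s ∧ s < e := by
    intro s hs
    have hpos : 0 < χ s := lt_of_le_of_ne (hχ0 s) (Ne.symm hs)
    have hm : 0 < min 1 (min ((s - a) / (b - a)) ((e - s) / (e - c))) := by
      rcases le_or_gt (min 1 (min ((s - a) / (b - a)) ((e - s) / (e - c)))) 0 with h | h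
      · rw [hχ_def] at hpos; simp only at hpos
        rw [max_eq_left h] at hpos
        exact absurd hpos (lt_irrefl 0)
      · exact h
    have h1 : 0 < (s - a) / (b - a) :=
      lt_of_lt_of_le hm (le_trans (min_le_right _ _) (min_le_left _ _))
    have h2 : 0 < (e - s) / (e - c) :=
      lt_of_lt_of_le hm (le_trans (min_le_right _ _) (min_le_right _ _))
    constructor
    · rcases div_pos_iff.mp h1 with ⟨h, _⟩ | ⟨_, h⟩ <;> linarith
    · rcases div_pos_iff.mp h2 with ⟨h, _⟩ | ⟨_, h⟩ <;> linarith
  have hχc : Continuous χ := by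
    apply continuous_const.max
    apply continuous_const.min
    exact ((continuous_id.sub continuous_const).div_const _).min
      ((continuous_const.sub continuous_id).div_const _)
  -- the truncated test function g
  set g : ℝ × EuclideanSpace ℝ (Fin d) → ℝ := fun p => f p.2 * p.1 * χ p.1 with hg_def
  have hgc : Continuous g :=
    ((hf.comp continuous_snd).mul continuous_fst).mul (hχc.comp continuous_fst)
  have hgsupp : Function.support g ⊆ Set.Icc a e ×ˢ tsupport f := by
    intro p hp
    rw [Function.mem_support, hg_def] at hp
    have hf2 : f p.2 ≠ 0 := fun h => hp (by simp [h])
    have hχ2 : χ p.1 ≠ 0 := fun h => hp (by simp [h])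
    obtain ⟨h1, h2⟩ := hχsupp _ hχ2
    exact ⟨⟨h1.le, h2.le⟩, subset_closure (Function.mem_support.mpr hf2)⟩
  have hgts : tsupport g ⊆ Set.Icc a e ×ˢ tsupport f :=
    closure_minimal hgsupp (isClosed_Icc.prod (isClosed_tsupport f))
  have hgcs : HasCompactSupport g :=
    (isCompact_Icc.prod hfc).of_isClosed_subset (isClosed_tsupport g) hgts
  have hgpos : tsupport g ⊆ {p | 0 < p.1} := fun p hp =>
    lt_of_lt_of_le ha (hgts hp).1.1
  have hg := hvague g hgc hgcs hgpos
  rw [Metric.tendsto_atTop] at hg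
  obtain ⟨I₁, hI₁⟩ := hg ε' hε'
  refine ⟨max I₀ I₁, fun i hi => ?_⟩
  have hInt : Integrable (fun p => f p.2 * p.1) γ :=
    integrable_aux γ hγpos k (hγloc k) f hf M hM hsupp
  have hInti : Integrable (fun p => f p.2 * p.1) (γi i) :=
    integrable_aux (γi i) (hγipos i) k (hγiloc i k) f hf M hM hsupp
  have hb1 : ‖(∫ p, f p.2 * p.1 ∂(γi i)) - ∫ p, g p ∂(γi i)‖ ≤ M * (2 * ε') :=
    key_bound (γi i) (hγipos i) k f hf M hM hsupp χ hχc hχ0 hχ1 b c hχeq (2 * ε')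
      (by positivity) (hitail i (le_trans (le_max_left _ _) hi)) hInti
  have hb2 : ‖(∫ p, f p.2 * p.1 ∂γ) - ∫ p, g p ∂γ‖ ≤ M * ε' :=
    key_bound γ hγpos k f hf M hM hsupp χ hχc hχ0 hχ1 b c hχeq ε' hε'.le hγtail hInt
  have hb3 : dist (∫ p, g p ∂(γi i)) (∫ p, g p ∂γ) < ε' :=
    hI₁ i (le_trans (le_max_right _ _) hi)
  rw [Real.dist_eq] at hb3 ⊢
  rw [Real.norm_eq_abs] at hb1 hb2
  have hMε : M * ε' = ε / 8 := by
    rw [hε'_def]; field_simp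
  have hε'le : ε' ≤ ε / 8 := by
    rw [← hMε]
    exact le_mul_of_one_le_left hε'.le hM1
  calc |(∫ p, f p.2 * p.1 ∂(γi i)) - ∫ p, f p.2 * p.1 ∂γ|
      = |((∫ p, f p.2 * p.1 ∂(γi i)) - ∫ p, g p ∂(γi i))
          + ((∫ p, g p ∂(γi i)) - ∫ p, g p ∂γ)
          + ((∫ p, g p ∂γ) - ∫ p, f p.2 * p.1 ∂γ)| := by congr 1; ring
    _ ≤ |(∫ p, f p.2 * p.1 ∂(γi i)) - ∫ p, g p ∂(γi i)|
          + |(∫ p, g p ∂(γi i)) - ∫ p, g p ∂γ|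
          + |(∫ p, g p ∂γ) - ∫ p, f p.2 * p.1 ∂γ| := abs_add_three _ _ _
    _ < ε := by
        rw [abs_sub_comm (∫ p, g p ∂γ)]
        have hMε2 : M * (2 * ε') = ε / 4 := by
          have : M * (2 * ε') = 2 * (M * ε') := by ring
          rw [this, hMε]; ring
        rw [hMε2] at hb1
        rw [hMε] at hb2
        replace hb3 := lt_of_lt_of_le hb3 hε'le
        linarith
end

section
/- Let ξ : (0,∞) → [0,1] be continuous with compact support and ξ = 1 on [q^N, q^{-N}], and let f ∈ C₀(ℝᵈ) with supp f ⊂ B(k). If γ, γ' are point configurations on (0,∞)×ℝᵈ with |⟨f(x)ξ(s)s, γ−γ'⟩| ≤ ε, and the masses of γ and γ' over B(k) × ((0,q^N)∪(q^{-N},∞)) are at most ε and 2ε respectively, then |∑_{(s,x)∈γ} f(x)s − ∑_{(s,x)∈γ'} f(x)s| ≤ ε(1 + 6‖f‖_∞). -/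
lemma helper_side {ι : Type} {E : Type*} (f : E → ℝ) (ξ : ℝ → ℝ)
    (s : ι → ℝ) (x : ι → E) (P : ι → Prop) (M c : ℝ) (hM0 : 0 ≤ M) (hc0 : 0 ≤ c)
    (hs : ∀ i, 0 < s i)
    (hξ01 : ∀ u, 0 ≤ ξ u ∧ ξ u ≤ 1)
    (hzero : ∀ i, ¬ P i → f (x i) * (1 - ξ (s i)) * s i = 0)
    (hMb : ∀ y, |f y| ≤ M)
    (hsum : Summable fun i => |f (x i)| * s i)
    (hmass : ∑' i : {i // P i}, ENNReal.ofReal (s i.1) ≤ ENNReal.ofReal c) :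
    |(∑' i, f (x i) * s i) - ∑' i, f (x i) * ξ (s i) * s i| ≤ M * c := by
  have habs : ∀ i, |f (x i) * s i| = |f (x i)| * s i := fun i => by
    rw [abs_mul, abs_of_pos (hs i)]
  have hsum1 : Summable fun i => f (x i) * s i := by
    refine Summable.of_abs ?_
    simpa only [habs] using hsum
  have hξb : ∀ i, |f (x i) * ξ (s i) * s i| ≤ |f (x i)| * s i := fun i => by
    rw [abs_mul, abs_mul, abs_of_nonneg (hξ01 (s i)).1, abs_of_pos (hs i)]
    have := (hξ01 (s i)).2
    nlinarith [mul_nonneg (mul_nonneg (abs_nonneg (f (x i))) (sub_nonneg.2 this)) (hs i).le]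
  have hsum2 : Summable fun i => f (x i) * ξ (s i) * s i :=
    Summable.of_abs (hsum.of_nonneg_of_le (fun i => abs_nonneg _) hξb)
  set g : ι → ℝ := fun i => f (x i) * (1 - ξ (s i)) * s i with hg
  have hgb : ∀ i, |g i| ≤ |f (x i)| * s i := fun i => by
    have h1 : 0 ≤ 1 - ξ (s i) := by linarith [(hξ01 (s i)).2]
    simp only [hg, abs_mul, abs_of_nonneg h1, abs_of_pos (hs i)]
    nlinarith [mul_nonneg (mul_nonneg (abs_nonneg (f (x i))) (hξ01 (s i)).1) (hs i).le]
  have hsumg : Summable fun i => |g i| :=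
    hsum.of_nonneg_of_le (fun i => abs_nonneg _) hgb
  have heq : (∑' i, f (x i) * s i) - ∑' i, f (x i) * ξ (s i) * s i = ∑' i, g i := by
    rw [← Summable.tsum_sub hsum1 hsum2]
    exact tsum_congr fun i => by ring
  rw [heq]
  have hfin : ∑' i : {i // P i}, ENNReal.ofReal (s i.1) ≠ ⊤ :=
    (lt_of_le_of_lt hmass ENNReal.ofReal_lt_top).ne
  have hsumsub : Summable fun i : {i // P i} => s i.1 := by
    have := ENNReal.summable_toReal hfin
    refine this.congr fun i => ?_
    exact ENNReal.toReal_ofReal (hs _).le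
  have hsub_le : ∑' i : {i // P i}, s i.1 ≤ c := by
    have h1 := ENNReal.toReal_mono (ENNReal.ofReal_ne_top) hmass
    rw [ENNReal.tsum_toReal_eq (fun _ => ENNReal.ofReal_ne_top),
      ENNReal.toReal_ofReal hc0] at h1
    calc ∑' i : {i // P i}, s i.1
        = ∑' i : {i // P i}, (ENNReal.ofReal (s i.1)).toReal :=
          tsum_congr fun i => (ENNReal.toReal_ofReal (hs _).le).symm
      _ ≤ c := h1
  have h2 : |∑' i, g i| ≤ ∑' i, |g i| := by
    simpa using norm_tsum_le_tsum_norm (f := g) (by simpa using hsumg)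
  refine h2.trans ?_
  have hsupp : Function.support (fun i => |g i|) ⊆ {i | P i} := by
    intro i hi
    by_contra hP
    refine hi ?_
    show |f (x i) * (1 - ξ (s i)) * s i| = 0
    rw [hzero i hP, abs_zero]
  rw [← tsum_subtype_eq_of_support_subset hsupp]
  calc (∑' i : {i | P i}, |g i.1|)
      ≤ ∑' i : {i | P i}, M * s i.1 := by
        refine Summable.tsum_le_tsum (fun i => ?_) (hsumg.subtype _) (hsumsub.mul_left M)
        refine (hgb i.1).trans ?_
        exact mul_le_mul_of_nonneg_right (hMb _) (hs _).le
    _ = M * ∑' i : {i | P i}, s i.1 := tsum_mul_left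
    _ ≤ M * c := mul_le_mul_of_nonneg_left hsub_le hM0

/-- the quantitative estimate in the continuity proof of `R`. With
`ξ = 1` on `[q^N, q^{−N}]`, `0 ≤ ξ ≤ 1`, `supp f ⊆ B(k)`, `|⟨f(x)ξ(s)s, γ−γ'⟩| ≤ ε`, and
the masses of `γ, γ'` over `B(k) × ((0,q^N)∪(q^{−N},∞))` at most `ε` and `2ε`, one gets
`|∑_γ f(x)s − ∑_{γ'} f(x)s| ≤ ε(1 + 6‖f‖_∞)`. -/
theorem stmt_14 (d k N : ℕ) (q ε M : ℝ) (hq : q ∈ Set.Ioo (0 : ℝ) 1) (hε : 0 < ε)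
    (f : EuclideanSpace ℝ (Fin d) → ℝ) (ξ : ℝ → ℝ)
    (hf : Continuous f) (hM : ∀ y, |f y| ≤ M)
    (hfsupp : ∀ y : EuclideanSpace ℝ (Fin d), (∃ j, (k : ℝ) < |y j|) → f y = 0)
    (hξcont : Continuous ξ) (hξcpt : HasCompactSupport ξ)
    (hξ₁ : ∀ u ∈ Set.Icc ((q : ℝ) ^ (N : ℤ)) (q ^ (-(N : ℤ))), ξ u = 1)
    (hξ₂ : ∀ u : ℝ, 0 ≤ ξ u ∧ ξ u ≤ 1)
    -- the two configurations, as countable families of atoms `(s_i, x_i)`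
    (ι ι' : Type) [Countable ι] [Countable ι']
    (s : ι → ℝ) (x : ι → EuclideanSpace ℝ (Fin d))
    (s' : ι' → ℝ) (x' : ι' → EuclideanSpace ℝ (Fin d))
    (hs : ∀ i, 0 < s i) (hs' : ∀ j, 0 < s' j)
    (hsum : Summable fun i => |f (x i)| * s i)
    (hsum' : Summable fun j => |f (x' j)| * s' j)
    -- |⟨f(x)ξ(s)s, γ − γ'⟩| ≤ ε
    (hpair : |(∑' i : ι, f (x i) * ξ (s i) * s i)
        - ∑' j : ι', f (x' j) * ξ (s' j) * s' j| ≤ ε)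
    -- small masses over B(k) × ((0,q^N) ∪ (q^{−N},∞))
    (hmass : ∑' i : {i : ι // (∀ j, |x i j| ≤ (k : ℝ)) ∧
        (s i < q ^ (N : ℤ) ∨ q ^ (-(N : ℤ)) < s i)}, ENNReal.ofReal (s i.1)
      ≤ ENNReal.ofReal ε)
    (hmass' : ∑' j : {j : ι' // (∀ m, |x' j m| ≤ (k : ℝ)) ∧
        (s' j < q ^ (N : ℤ) ∨ q ^ (-(N : ℤ)) < s' j)}, ENNReal.ofReal (s' j.1)
      ≤ ENNReal.ofReal (2 * ε)) :
    |(∑' i : ι, f (x i) * s i) - ∑' j : ι', f (x' j) * s' j| ≤ ε * (1 + 6 * M) := by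
  have hM0 : 0 ≤ M := (abs_nonneg _).trans (hM 0)
  have hz : ∀ (E : Type) (t : E → ℝ) (y : E → EuclideanSpace ℝ (Fin d)) (i : E),
      ¬((∀ j, |y i j| ≤ (k : ℝ)) ∧ (t i < q ^ (N : ℤ) ∨ q ^ (-(N : ℤ)) < t i)) →
      f (y i) * (1 - ξ (t i)) * t i = 0 := by
    intro E t y i hP
    by_cases hx : ∀ j, |y i j| ≤ (k : ℝ)
    · have h1 : ¬(t i < q ^ (N : ℤ) ∨ q ^ (-(N : ℤ)) < t i) := fun h => hP ⟨hx, h⟩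
      push_neg at h1
      rw [hξ₁ (t i) ⟨h1.1, h1.2⟩]
      ring
    · push_neg at hx
      rw [hfsupp (y i) hx]
      ring
  have hA := helper_side f ξ s x
    (fun i => (∀ j, |x i j| ≤ (k : ℝ)) ∧ (s i < q ^ (N : ℤ) ∨ q ^ (-(N : ℤ)) < s i))
    M ε hM0 hε.le hs hξ₂ (hz ι s x) hM hsum hmass
  have hB := helper_side f ξ s' x'
    (fun j => (∀ m, |x' j m| ≤ (k : ℝ)) ∧ (s' j < q ^ (N : ℤ) ∨ q ^ (-(N : ℤ)) < s' j))
    M (2 * ε) hM0 (by linarith) hs' hξ₂ (hz ι' s' x') hM hsum' hmass'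
  set A := ∑' i : ι, f (x i) * s i
  set B := ∑' j : ι', f (x' j) * s' j
  set Aξ := ∑' i : ι, f (x i) * ξ (s i) * s i
  set Bξ := ∑' j : ι', f (x' j) * ξ (s' j) * s' j
  have key : |A - B| ≤ |A - Aξ| + |Aξ - Bξ| + |B - Bξ| := by
    have h1 := abs_add_le (A - Aξ + (Aξ - Bξ)) (Bξ - B)
    have h2 := abs_add_le (A - Aξ) (Aξ - Bξ)
    have h3 : |Bξ - B| = |B - Bξ| := abs_sub_comm _ _
    calc |A - B| = |A - Aξ + (Aξ - Bξ) + (Bξ - B)| := by ring_nf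
      _ ≤ |A - Aξ + (Aξ - Bξ)| + |Bξ - B| := h1
      _ ≤ |A - Aξ| + |Aξ - Bξ| + |B - Bξ| := by rw [← h3]; linarith
  calc |A - B| ≤ |A - Aξ| + |Aξ - Bξ| + |B - Bξ| := key
    _ ≤ M * ε + ε + M * (2 * ε) := by
        have := hpair
        gcongr <;> assumption
    _ ≤ ε * (1 + 6 * M) := by nlinarith
end

section
/- Let σ be a measure on X̂ = (0,∞)×ℝᵈ and μ a probability measure on configurations satisfying the Nguyen–Zessin identity: for all measurable F ≥ 0, ∫ ∑_{x∈τ(η)} F(s_x,x,η) dμ(η) = ∫∫ exp(−s ∫φ(x,x')dη(x')) F(s,x,η+sδ_x) dσ(s,x) dμ(η). If F : K(ℝᵈ) → ℝ is measurable with F = 0 μ-a.e., then for every bounded Borel Λ ⊂ ℝᵈ: F(η + sδ_x) = 0 for (ds dx dμ(η))-almost every (s,x,η) with x ∈ Λ, where the Lebesgue-type measure l(s,x)exp(−s∫φ(x,·)dη) ds dx dμ is equivalent to ds dx dμ on (0,∞)×Λ×K. -/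
open MeasureTheory
open scoped ENNReal

/-- if `μ` satisfies the Nguyen–Zessin identity and `F = 0` `μ`-a.e., then
for every bounded Borel `Λ`, `F(η + sδ_x) = 0` for `ds dx dμ(η)`-a.e. `(s,x,η)` with
`x ∈ Λ`. -/
theorem stmt_16 (d : ℕ)
    (μ : Measure (Measure (EuclideanSpace ℝ (Fin d)))) [IsProbabilityMeasure μ]
    (l : ℝ → EuclideanSpace ℝ (Fin d) → ℝ)
    (hl : Measurable fun p : ℝ × EuclideanSpace ℝ (Fin d) => l p.1 p.2)
    (hlpos : ∀ s : ℝ, 0 < s → ∀ x, 0 < l s x)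
    (φ : EuclideanSpace ℝ (Fin d) → EuclideanSpace ℝ (Fin d) → ℝ)
    (hφmeas : Measurable fun p : EuclideanSpace ℝ (Fin d) × EuclideanSpace ℝ (Fin d) =>
      φ p.1 p.2)
    (hφsymm : ∀ x y, φ x y = φ y x)
    (hφbdd : ∃ C : ℝ, ∀ x y, |φ x y| ≤ C)
    (hφrange : ∃ R : ℝ, 0 < R ∧ ∀ x y, R < dist x y → φ x y = 0)
    -- the Nguyen–Zessin identity
    (hNZ : ∀ G : ℝ → EuclideanSpace ℝ (Fin d) → Measure (EuclideanSpace ℝ (Fin d)) → ℝ≥0∞,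
      Measurable (fun p : ℝ × EuclideanSpace ℝ (Fin d) × Measure (EuclideanSpace ℝ (Fin d)) =>
        G p.1 p.2.1 p.2.2) →
      (∫⁻ η, ∑' x : {x : EuclideanSpace ℝ (Fin d) // η {x} ≠ 0},
          G (η {(x : EuclideanSpace ℝ (Fin d))}).toReal (x : EuclideanSpace ℝ (Fin d)) η ∂μ)
      = ∫⁻ η, ∫⁻ p in (Set.Ioi (0 : ℝ)) ×ˢ (Set.univ : Set (EuclideanSpace ℝ (Fin d))),
          ENNReal.ofReal (l p.1 p.2 / p.1 * Real.exp (- p.1 * ∫ x', φ p.2 x' ∂η))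
            * G p.1 p.2 (η + ENNReal.ofReal p.1 • Measure.dirac p.2) ∂volume ∂μ)
    (F : Measure (EuclideanSpace ℝ (Fin d)) → ℝ)
    (hFmeas : Measurable F)
    (hF0 : ∀ᵐ η ∂μ, F η = 0) :
    ∀ Λ : Set (EuclideanSpace ℝ (Fin d)), Bornology.IsBounded Λ → MeasurableSet Λ →
      ∀ᵐ q ∂(((volume : Measure ℝ).restrict (Set.Ioi 0)).prod
          (((volume : Measure (EuclideanSpace ℝ (Fin d))).restrict Λ).prod μ)),
        F (q.2.2 + ENNReal.ofReal q.1 • Measure.dirac q.2.1) = 0 := by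
  classical
  intro Λ _hΛb hΛm
  -- measurability of the "add a particle" map
  have hΦ : Measurable (fun z : Measure (EuclideanSpace ℝ (Fin d)) × (ℝ × (EuclideanSpace ℝ (Fin d))) =>
      z.1 + ENNReal.ofReal z.2.1 • Measure.dirac z.2.2) := by
    apply Measure.measurable_of_measurable_coe
    intro A hA
    have heq : (fun z : Measure (EuclideanSpace ℝ (Fin d)) × (ℝ × (EuclideanSpace ℝ (Fin d))) =>
        (z.1 + ENNReal.ofReal z.2.1 • Measure.dirac z.2.2) A)
        = fun z => z.1 A + ENNReal.ofReal z.2.1 * A.indicator 1 z.2.2 := by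
      funext z
      simp [Measure.dirac_apply' _ hA]
    rw [heq]
    exact ((Measure.measurable_coe hA).comp measurable_fst).add
      ((ENNReal.measurable_ofReal.comp (measurable_fst.comp measurable_snd)).mul
        ((measurable_one.indicator hA).comp (measurable_snd.comp measurable_snd)))
  -- the test function
  set G : ℝ → (EuclideanSpace ℝ (Fin d)) → Measure (EuclideanSpace ℝ (Fin d)) → ℝ≥0∞ :=
    fun _ x ξ => (if F ξ = 0 then 0 else (⊤ : ℝ≥0∞)) * Λ.indicator 1 x with hG
  have hGmeas : Measurable (fun p : ℝ × (EuclideanSpace ℝ (Fin d)) × Measure (EuclideanSpace ℝ (Fin d)) => G p.1 p.2.1 p.2.2) := by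
    refine Measurable.mul ?_ ?_
    · exact Measurable.ite
        ((hFmeas.comp (measurable_snd.comp measurable_snd)) (measurableSet_singleton 0))
        measurable_const measurable_const
    · exact (measurable_one.indicator hΛm).comp (measurable_fst.comp measurable_snd)
  have hid := hNZ G hGmeas
  -- the LHS of the identity vanishes since F = 0 a.e.
  have hR : ∫⁻ η, ∫⁻ p in (Set.Ioi (0 : ℝ)) ×ˢ (Set.univ : Set (EuclideanSpace ℝ (Fin d))),
      ENNReal.ofReal (l p.1 p.2 / p.1 * Real.exp (- p.1 * ∫ x', φ p.2 x' ∂η))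
        * G p.1 p.2 (η + ENNReal.ofReal p.1 • Measure.dirac p.2) ∂volume ∂μ = 0 := by
    rw [← hid]
    have h0 : ∀ᵐ η ∂μ, (∑' x : {x : (EuclideanSpace ℝ (Fin d)) // η {x} ≠ 0},
        G (η {(x : (EuclideanSpace ℝ (Fin d)))}).toReal (x : (EuclideanSpace ℝ (Fin d))) η) = 0 := by
      filter_upwards [hF0] with η hη
      have hz : ∀ x : {x : (EuclideanSpace ℝ (Fin d)) // η {x} ≠ 0},
          G (η {(x : (EuclideanSpace ℝ (Fin d)))}).toReal (x : (EuclideanSpace ℝ (Fin d))) η = 0 := by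
        intro x
        simp [hG, hη]
      rw [tsum_congr hz]
      exact tsum_zero
    rw [lintegral_congr_ae h0, lintegral_zero]
  -- the bad set in `Measure (EuclideanSpace ℝ (Fin d)) × (ℝ × (EuclideanSpace ℝ (Fin d)))` coordinates
  set Sb : Set (Measure (EuclideanSpace ℝ (Fin d)) × (ℝ × (EuclideanSpace ℝ (Fin d)))) :=
    {z | 0 < z.2.1 ∧ z.2.2 ∈ Λ ∧
      F (z.1 + ENNReal.ofReal z.2.1 • Measure.dirac z.2.2) ≠ 0} with hSb
  have hS : MeasurableSet Sb := by
    refine MeasurableSet.inter ?_ (MeasurableSet.inter ?_ ?_)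
    · exact (measurable_fst.comp measurable_snd) measurableSet_Ioi
    · exact (measurable_snd.comp measurable_snd) hΛm
    · exact ((hFmeas.comp hΦ) (measurableSet_singleton 0)).compl
  -- key pointwise bound
  have hkey : ∀ η : Measure (EuclideanSpace ℝ (Fin d)), (volume : Measure (ℝ × (EuclideanSpace ℝ (Fin d)))) (Prod.mk η ⁻¹' Sb)
      ≤ ∫⁻ p in (Set.Ioi (0 : ℝ)) ×ˢ (Set.univ : Set (EuclideanSpace ℝ (Fin d))),
          ENNReal.ofReal (l p.1 p.2 / p.1 * Real.exp (- p.1 * ∫ x', φ p.2 x' ∂η))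
            * G p.1 p.2 (η + ENNReal.ofReal p.1 • Measure.dirac p.2) ∂volume := by
    intro η
    have hSlm : MeasurableSet (Prod.mk η ⁻¹' Sb) := measurable_prodMk_left hS
    have hsub : (Prod.mk η ⁻¹' Sb) ⊆ (Set.Ioi (0 : ℝ)) ×ˢ (Set.univ : Set (EuclideanSpace ℝ (Fin d))) :=
      fun p hp => ⟨hp.1, trivial⟩
    have h1 : (volume : Measure (ℝ × (EuclideanSpace ℝ (Fin d)))) (Prod.mk η ⁻¹' Sb)
        = ∫⁻ p in (Set.Ioi (0 : ℝ)) ×ˢ (Set.univ : Set (EuclideanSpace ℝ (Fin d))),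
            (Prod.mk η ⁻¹' Sb).indicator 1 p ∂volume := by
      rw [lintegral_indicator_one hSlm, Measure.restrict_apply hSlm,
        Set.inter_eq_self_of_subset_left hsub]
    rw [h1]
    refine lintegral_mono fun p => ?_
    by_cases hp : p ∈ Prod.mk η ⁻¹' Sb
    · have h2 : G p.1 p.2 (η + ENNReal.ofReal p.1 • Measure.dirac p.2) = ⊤ := by
        have hx : p.2 ∈ Λ := hp.2.1
        have hf : F (η + ENNReal.ofReal p.1 • Measure.dirac p.2) ≠ 0 := hp.2.2
        simp [hG, hf, Set.indicator_of_mem hx]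
      have h3 : ENNReal.ofReal (l p.1 p.2 / p.1 * Real.exp (- p.1 * ∫ x', φ p.2 x' ∂η)) ≠ 0 := by
        refine (ENNReal.ofReal_pos.mpr ?_).ne'
        exact mul_pos (div_pos (hlpos p.1 hp.1 p.2) hp.1) (Real.exp_pos _)
      rw [Set.indicator_of_mem hp, h2, ENNReal.mul_top h3]
      exact le_top
    · rw [Set.indicator_of_notMem hp]
      exact zero_le
  -- the product measure of the bad set vanishes
  have hprod : (μ.prod (volume : Measure (ℝ × (EuclideanSpace ℝ (Fin d))))) Sb = 0 := by
    refine le_antisymm ?_ zero_le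
    rw [Measure.prod_apply hS]
    calc ∫⁻ η, (volume : Measure (ℝ × (EuclideanSpace ℝ (Fin d)))) (Prod.mk η ⁻¹' Sb) ∂μ
        ≤ ∫⁻ η, ∫⁻ p in (Set.Ioi (0 : ℝ)) ×ˢ (Set.univ : Set (EuclideanSpace ℝ (Fin d))),
            ENNReal.ofReal (l p.1 p.2 / p.1 * Real.exp (- p.1 * ∫ x', φ p.2 x' ∂η))
              * G p.1 p.2 (η + ENNReal.ofReal p.1 • Measure.dirac p.2) ∂volume ∂μ :=
          lintegral_mono hkey
      _ = 0 := hR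
  -- iterated form of the vanishing
  have hms : Measurable fun p : ℝ × (EuclideanSpace ℝ (Fin d)) => μ ((fun η => (η, p)) ⁻¹' Sb) :=
    measurable_measure_prodMk_right hS
  have h2 : ∫⁻ s, ∫⁻ x, μ ((fun η : Measure (EuclideanSpace ℝ (Fin d)) => (η, (s, x))) ⁻¹' Sb)
      ∂(volume : Measure (EuclideanSpace ℝ (Fin d))) ∂(volume : Measure ℝ) = 0 := by
    have e1 : (μ.prod (volume : Measure (ℝ × (EuclideanSpace ℝ (Fin d))))) Sb
        = ∫⁻ p, μ ((fun η => (η, p)) ⁻¹' Sb) ∂(volume : Measure (ℝ × (EuclideanSpace ℝ (Fin d)))) :=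
      Measure.prod_apply_symm hS
    have e2 : ∫⁻ p, μ ((fun η => (η, p)) ⁻¹' Sb) ∂(volume : Measure (ℝ × (EuclideanSpace ℝ (Fin d))))
        = ∫⁻ s, ∫⁻ x, μ ((fun η : Measure (EuclideanSpace ℝ (Fin d)) => (η, (s, x))) ⁻¹' Sb)
            ∂(volume : Measure (EuclideanSpace ℝ (Fin d))) ∂(volume : Measure ℝ) := by
      rw [Measure.volume_eq_prod]
      exact lintegral_prod _ hms.aemeasurable
    rw [← e2, ← e1]
    exact hprod
  -- the bad set in the target coordinates
  set Sg : Set (ℝ × (EuclideanSpace ℝ (Fin d)) × Measure (EuclideanSpace ℝ (Fin d))) :=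
    {q | 0 < q.1 ∧ q.2.1 ∈ Λ ∧
      F (q.2.2 + ENNReal.ofReal q.1 • Measure.dirac q.2.1) ≠ 0} with hSg
  have hΦ' : Measurable (fun q : ℝ × (EuclideanSpace ℝ (Fin d)) × Measure (EuclideanSpace ℝ (Fin d)) =>
      q.2.2 + ENNReal.ofReal q.1 • Measure.dirac q.2.1) := by
    have hr : Measurable (fun q : ℝ × (EuclideanSpace ℝ (Fin d)) × Measure (EuclideanSpace ℝ (Fin d)) =>
        ((q.2.2, (q.1, q.2.1)) : Measure (EuclideanSpace ℝ (Fin d)) × (ℝ × (EuclideanSpace ℝ (Fin d))))) :=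
      (measurable_snd.comp measurable_snd).prodMk
        (measurable_fst.prodMk (measurable_fst.comp measurable_snd))
    exact hΦ.comp hr
  have hSg' : MeasurableSet Sg := by
    refine MeasurableSet.inter ?_ (MeasurableSet.inter ?_ ?_)
    · exact measurable_fst measurableSet_Ioi
    · exact (measurable_fst.comp measurable_snd) hΛm
    · exact ((hFmeas.comp hΦ') (measurableSet_singleton 0)).compl
  -- it is null for the target measure
  have hν : (((volume : Measure ℝ).restrict (Set.Ioi 0)).prod
      (((volume : Measure (EuclideanSpace ℝ (Fin d))).restrict Λ).prod μ)) Sg = 0 := by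
    refine le_antisymm ?_ zero_le
    rw [Measure.prod_apply hSg']
    calc ∫⁻ s, (((volume : Measure (EuclideanSpace ℝ (Fin d))).restrict Λ).prod μ) (Prod.mk s ⁻¹' Sg)
          ∂((volume : Measure ℝ).restrict (Set.Ioi 0))
        = ∫⁻ s, ∫⁻ x, μ (Prod.mk x ⁻¹' (Prod.mk s ⁻¹' Sg))
            ∂((volume : Measure (EuclideanSpace ℝ (Fin d))).restrict Λ) ∂((volume : Measure ℝ).restrict (Set.Ioi 0)) :=
          lintegral_congr fun s =>
            Measure.prod_apply (measurable_prodMk_left hSg')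
      _ ≤ ∫⁻ s, ∫⁻ x, μ (Prod.mk x ⁻¹' (Prod.mk s ⁻¹' Sg))
            ∂(volume : Measure (EuclideanSpace ℝ (Fin d))) ∂(volume : Measure ℝ) := by
          refine lintegral_mono' Measure.restrict_le_self fun s => ?_
          exact lintegral_mono' Measure.restrict_le_self le_rfl
      _ = 0 := h2
  -- conclude
  have hae1 : ∀ᵐ q ∂(((volume : Measure ℝ).restrict (Set.Ioi 0)).prod
      (((volume : Measure (EuclideanSpace ℝ (Fin d))).restrict Λ).prod μ)), 0 < q.1 := by
    rw [ae_iff]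
    have he : {q : ℝ × (EuclideanSpace ℝ (Fin d)) × Measure (EuclideanSpace ℝ (Fin d)) | ¬ 0 < q.1}
        = (Set.Ioi (0 : ℝ))ᶜ ×ˢ (Set.univ : Set ((EuclideanSpace ℝ (Fin d)) × Measure (EuclideanSpace ℝ (Fin d)))) := by
      ext q; simp
    rw [he, Measure.prod_prod]
    have h0 : ((volume : Measure ℝ).restrict (Set.Ioi 0)) (Set.Ioi (0 : ℝ))ᶜ = 0 := by
      rw [Measure.restrict_apply measurableSet_Ioi.compl, Set.compl_inter_self]
      exact measure_empty
    rw [h0, zero_mul]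
  have hae2 : ∀ᵐ q ∂(((volume : Measure ℝ).restrict (Set.Ioi 0)).prod
      (((volume : Measure (EuclideanSpace ℝ (Fin d))).restrict Λ).prod μ)), q.2.1 ∈ Λ := by
    rw [ae_iff]
    have he : {q : ℝ × (EuclideanSpace ℝ (Fin d)) × Measure (EuclideanSpace ℝ (Fin d)) | ¬ q.2.1 ∈ Λ}
        = (Set.univ : Set ℝ) ×ˢ (Λᶜ ×ˢ (Set.univ : Set (Measure (EuclideanSpace ℝ (Fin d))))) := by
      ext q; simp
    rw [he, Measure.prod_prod, Measure.prod_prod]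
    have h0 : ((volume : Measure (EuclideanSpace ℝ (Fin d))).restrict Λ) Λᶜ = 0 := by
      rw [Measure.restrict_apply hΛm.compl, Set.compl_inter_self]
      exact measure_empty
    rw [h0, zero_mul, mul_zero]
  have hae3 : ∀ᵐ q ∂(((volume : Measure ℝ).restrict (Set.Ioi 0)).prod
      (((volume : Measure (EuclideanSpace ℝ (Fin d))).restrict Λ).prod μ)), q ∉ Sg := by
    rw [ae_iff]
    simpa using hν
  filter_upwards [hae1, hae2, hae3] with q h1 h2' h3
  by_contra hFq
  exact h3 ⟨h1, h2', hFq⟩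
end
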